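/- arXiv:1702.01980 — 3 statements merged into one kernel-verified Lean document; each statement's English description precedes it below -/
import Mathlib

section
/- For R ∈ (0, ∞] and ε > 0, let ξ_{ε,R} : ℝ → [−1,1] be the unique solution of the initial value problem ξ_{ε,R}(0) = 0, ξ_{ε,R}' = (1/ε)(1 − ξ_{ε,R}²)^{1/2}(1 − ξ_{ε,R}² + (πε/(2R))²)^{1/2}. Then ξ_{ε,R} is non-decreasing, odd (ξ_{ε,R}(x) = −ξ_{ε,R}(−x)), satisfies the exponential decay estimate |ξ_{ε,R}(x) − sign(x)| ≤ 2 e^{−2|x|/ε} for all x ∈ ℝ, and for R < ∞ there exists η_{ε,R} ∈ (0, R] such that ξ_{ε,R}(x) = 1 for all x ≥ η_{ε,R} and ξ_{ε,R}(x) = −1 for all x ≤ −η_{ε,R}. -/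
open Real ENNReal

noncomputable section

/-- The coefficient `πε/(2R)` appearing in the optimal profile ODE, with the
convention that it is `0` for `R = ∞`. -/
def odeCoeff (ε : ℝ) (R : ℝ≥0∞) : ℝ :=
  if R = ⊤ then 0 else π * ε / (2 * R.toReal)

open Set

/-! ### Auxiliary lemmas -/

lemma sqrt_diff_le' {t u v : ℝ} (ht : 0 < t) (hu : t ≤ u) (hv : t ≤ v) :
    |Real.sqrt u - Real.sqrt v| * (2 * Real.sqrt t) ≤ |u - v| := by
  have h0u : (0:ℝ) ≤ u := ht.le.trans hu
  have h0v : (0:ℝ) ≤ v := ht.le.trans hv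
  have key : (Real.sqrt u - Real.sqrt v) * (Real.sqrt u + Real.sqrt v) = u - v := by
    nlinarith [Real.sq_sqrt h0u, Real.sq_sqrt h0v]
  have h2 : 2 * Real.sqrt t ≤ Real.sqrt u + Real.sqrt v := by
    have := Real.sqrt_le_sqrt hu
    have := Real.sqrt_le_sqrt hv
    linarith
  have hsum : (0:ℝ) ≤ Real.sqrt u + Real.sqrt v := by positivity
  calc |Real.sqrt u - Real.sqrt v| * (2 * Real.sqrt t)
      ≤ |Real.sqrt u - Real.sqrt v| * (Real.sqrt u + Real.sqrt v) :=
        mul_le_mul_of_nonneg_left h2 (abs_nonneg _)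
    _ = |(Real.sqrt u - Real.sqrt v) * (Real.sqrt u + Real.sqrt v)| := by
        rw [abs_mul, abs_of_nonneg hsum]
    _ = |u - v| := by rw [key]

lemma lip_on_Icc' (a ε m : ℝ) (hε : 0 < ε) (hm0 : 0 ≤ m) (hm : m < 1) :
    ∃ K : NNReal, LipschitzOnWith K
      (fun y => ε⁻¹ * Real.sqrt (1 - y ^ 2) * Real.sqrt (1 - y ^ 2 + a ^ 2))
      (Icc 0 m) := by
  set t : ℝ := 1 - m ^ 2 with htdef
  have ht : 0 < t := by nlinarith
  have hst : 0 < Real.sqrt t := Real.sqrt_pos.mpr ht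
  set L : ℝ := ε⁻¹ * ((1 + Real.sqrt (1 + a ^ 2)) / Real.sqrt t) with hLdef
  refine ⟨L.toNNReal, lipschitzOnWith_iff_dist_le_mul.mpr ?_⟩
  intro y hy z hz
  rw [Real.dist_eq, Real.dist_eq]
  obtain ⟨hy0, hym⟩ := hy
  obtain ⟨hz0, hzm⟩ := hz
  have hy1 : t ≤ 1 - y ^ 2 := by nlinarith
  have hz1 : t ≤ 1 - z ^ 2 := by nlinarith
  have hy2 : t ≤ 1 - y ^ 2 + a ^ 2 := by nlinarith
  have hz2 : t ≤ 1 - z ^ 2 + a ^ 2 := by nlinarith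
  set sy1 := Real.sqrt (1 - y ^ 2)
  set sz1 := Real.sqrt (1 - z ^ 2)
  set sy2 := Real.sqrt (1 - y ^ 2 + a ^ 2)
  set sz2 := Real.sqrt (1 - z ^ 2 + a ^ 2)
  have hzy : |(1 - y ^ 2) - (1 - z ^ 2)| ≤ 2 * |y - z| := by
    have h : (1 - y ^ 2) - (1 - z ^ 2) = (z + y) * (z - y) := by ring
    rw [h, abs_mul, abs_sub_comm z y]
    have : |z + y| ≤ 2 := by rw [abs_le]; constructor <;> nlinarith
    nlinarith [abs_nonneg (y - z)]
  have hzy2 : |(1 - y ^ 2 + a ^ 2) - (1 - z ^ 2 + a ^ 2)| ≤ 2 * |y - z| := by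
    have h : (1 - y ^ 2 + a ^ 2) - (1 - z ^ 2 + a ^ 2) = (1 - y ^ 2) - (1 - z ^ 2) := by ring
    rw [h]; exact hzy
  have d1 : |sy1 - sz1| ≤ |y - z| / Real.sqrt t := by
    rw [le_div_iff₀ hst]
    have := sqrt_diff_le' ht hy1 hz1
    linarith
  have d2 : |sy2 - sz2| ≤ |y - z| / Real.sqrt t := by
    rw [le_div_iff₀ hst]
    have := sqrt_diff_le' ht hy2 hz2
    linarith
  have hsy1le : sy1 ≤ 1 := Real.sqrt_le_one.mpr (by nlinarith)
  have hsz2le : sz2 ≤ Real.sqrt (1 + a ^ 2) := Real.sqrt_le_sqrt (by nlinarith)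
  have hsy1n : 0 ≤ sy1 := Real.sqrt_nonneg _
  have hsz2n : 0 ≤ sz2 := Real.sqrt_nonneg _
  have split : ε⁻¹ * sy1 * sy2 - ε⁻¹ * sz1 * sz2
      = ε⁻¹ * (sy1 * (sy2 - sz2) + sz2 * (sy1 - sz1)) := by ring
  have hεinv : (0:ℝ) < ε⁻¹ := by positivity
  have step : |ε⁻¹ * sy1 * sy2 - ε⁻¹ * sz1 * sz2| ≤ L * |y - z| := by
    rw [split, abs_mul, abs_of_pos hεinv]
    have tri : |sy1 * (sy2 - sz2) + sz2 * (sy1 - sz1)|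
        ≤ sy1 * |sy2 - sz2| + sz2 * |sy1 - sz1| := by
      calc |sy1 * (sy2 - sz2) + sz2 * (sy1 - sz1)|
          ≤ |sy1 * (sy2 - sz2)| + |sz2 * (sy1 - sz1)| := abs_add_le _ _
        _ = sy1 * |sy2 - sz2| + sz2 * |sy1 - sz1| := by
            rw [abs_mul, abs_mul, abs_of_nonneg hsy1n, abs_of_nonneg hsz2n]
    have bound : sy1 * |sy2 - sz2| + sz2 * |sy1 - sz1|
        ≤ (1 + Real.sqrt (1 + a ^ 2)) * (|y - z| / Real.sqrt t) := by
      have h1 : sy1 * |sy2 - sz2| ≤ 1 * (|y - z| / Real.sqrt t) :=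
        mul_le_mul hsy1le d2 (abs_nonneg _) zero_le_one
      have h2 : sz2 * |sy1 - sz1| ≤ Real.sqrt (1 + a ^ 2) * (|y - z| / Real.sqrt t) :=
        mul_le_mul hsz2le d1 (abs_nonneg _) (Real.sqrt_nonneg _)
      linarith
    calc ε⁻¹ * |sy1 * (sy2 - sz2) + sz2 * (sy1 - sz1)|
        ≤ ε⁻¹ * ((1 + Real.sqrt (1 + a ^ 2)) * (|y - z| / Real.sqrt t)) :=
          mul_le_mul_of_nonneg_left (tri.trans bound) hεinv.le
      _ = L * |y - z| := by rw [hLdef]; field_simp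
  calc |ε⁻¹ * sy1 * sy2 - ε⁻¹ * sz1 * sz2| ≤ L * |y - z| := step
    _ ≤ (L.toNNReal : ℝ) * |y - z| := by
        apply mul_le_mul_of_nonneg_right _ (abs_nonneg _)
        rw [Real.coe_toNNReal']
        exact le_max_left _ _

section profile

variable {a ε : ℝ} {ξ : ℝ → ℝ}

lemma profile_mono (hε : 0 < ε)
    (hode : ∀ x, HasDerivAt ξ
      (ε⁻¹ * Real.sqrt (1 - ξ x ^ 2) * Real.sqrt (1 - ξ x ^ 2 + a ^ 2)) x) :
    Monotone ξ := by
  apply monotone_of_deriv_nonneg (fun x => (hode x).differentiableAt)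
  intro x
  rw [(hode x).deriv]
  positivity

lemma profile_nonneg (hε : 0 < ε) (hzero : ξ 0 = 0)
    (hode : ∀ x, HasDerivAt ξ
      (ε⁻¹ * Real.sqrt (1 - ξ x ^ 2) * Real.sqrt (1 - ξ x ^ 2 + a ^ 2)) x)
    {x : ℝ} (hx : 0 ≤ x) : 0 ≤ ξ x :=
  hzero ▸ profile_mono hε hode hx

lemma profile_deriv_ge (hε : 0 < ε) (hrange : ∀ x, ξ x ∈ Icc (-1:ℝ) 1) (x : ℝ) :
    ε⁻¹ * (1 - ξ x ^ 2) ≤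
      ε⁻¹ * Real.sqrt (1 - ξ x ^ 2) * Real.sqrt (1 - ξ x ^ 2 + a ^ 2) := by
  have h1 : 0 ≤ 1 - ξ x ^ 2 := by
    have := (hrange x).1; have := (hrange x).2; nlinarith
  have h2 : Real.sqrt (1 - ξ x ^ 2) ≤ Real.sqrt (1 - ξ x ^ 2 + a ^ 2) :=
    Real.sqrt_le_sqrt (by nlinarith)
  have h3 : Real.sqrt (1 - ξ x ^ 2) * Real.sqrt (1 - ξ x ^ 2) = 1 - ξ x ^ 2 :=
    Real.mul_self_sqrt h1
  have h4 : 0 ≤ Real.sqrt (1 - ξ x ^ 2) := Real.sqrt_nonneg _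
  have h5 : Real.sqrt (1 - ξ x ^ 2) * (1 - ξ x ^ 2).sqrt ≤
      Real.sqrt (1 - ξ x ^ 2) * Real.sqrt (1 - ξ x ^ 2 + a ^ 2) :=
    mul_le_mul_of_nonneg_left h2 h4
  rw [mul_assoc]
  apply mul_le_mul_of_nonneg_left _ (by positivity : (0:ℝ) ≤ ε⁻¹)
  linarith [h3, h5]

/-- Exponential decay towards `1` on the right half-line. -/
lemma profile_decay (hε : 0 < ε) (hrange : ∀ x, ξ x ∈ Icc (-1:ℝ) 1) (hzero : ξ 0 = 0)
    (hode : ∀ x, HasDerivAt ξ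
      (ε⁻¹ * Real.sqrt (1 - ξ x ^ 2) * Real.sqrt (1 - ξ x ^ 2 + a ^ 2)) x)
    {x : ℝ} (hx : 0 ≤ x) : 1 - ξ x ≤ 2 * Real.exp (-2 * x / ε) := by
  set w : ℝ → ℝ := fun y => (1 - ξ y) / (1 + ξ y) * Real.exp (2 * y / ε) with hw
  have hpos : ∀ y : ℝ, 0 ≤ y → 0 < 1 + ξ y := fun y hy => by
    have := profile_nonneg hε hzero hode hy; linarith
  have hderiv : ∀ y : ℝ, 0 ≤ y → ∃ W : ℝ, HasDerivAt w W y ∧ W ≤ 0 := by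
    intro y hy
    set D := ε⁻¹ * Real.sqrt (1 - ξ y ^ 2) * Real.sqrt (1 - ξ y ^ 2 + a ^ 2) with hD
    have hP := hpos y hy
    have hnum : HasDerivAt (fun z => 1 - ξ z) (-D) y := by
      exact (hode y).const_sub 1
    have hden : HasDerivAt (fun z => 1 + ξ z) D y := by
      exact (hode y).const_add 1
    have hquot : HasDerivAt (fun z => (1 - ξ z) / (1 + ξ z))
        ((-D * (1 + ξ y) - (1 - ξ y) * D) / (1 + ξ y) ^ 2) y :=
      hnum.div hden hP.ne'
    have hexp : HasDerivAt (fun z => Real.exp (2 * z / ε)) ((2 / ε) * Real.exp (2 * y / ε)) y := by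
      have h1 : HasDerivAt (fun z : ℝ => 2 * z / ε) (2 / ε) y := by
        simpa using ((hasDerivAt_id y).const_mul 2).div_const ε
      convert h1.exp using 1; ring
    have hprod := hquot.mul hexp
    refine ⟨_, hprod, ?_⟩
    have hDlb : ε⁻¹ * (1 - ξ y ^ 2) ≤ D := profile_deriv_ge hε hrange y
    have hQ : 0 ≤ 1 - ξ y := by have := (hrange y).2; linarith
    have hE : 0 < Real.exp (2 * y / ε) := Real.exp_pos _
    have key : (-D * (1 + ξ y) - (1 - ξ y) * D) / (1 + ξ y) ^ 2 * Real.exp (2 * y / ε)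
        + (1 - ξ y) / (1 + ξ y) * ((2 / ε) * Real.exp (2 * y / ε))
        = ((-2 * D + 2 * ε⁻¹ * (1 - ξ y) * (1 + ξ y)) / (1 + ξ y) ^ 2) * Real.exp (2 * y / ε) := by
      field_simp
      ring
    rw [key]
    apply mul_nonpos_of_nonpos_of_nonneg _ hE.le
    apply div_nonpos_of_nonpos_of_nonneg _ (by positivity)
    have : ε⁻¹ * (1 - ξ y ^ 2) = ε⁻¹ * (1 - ξ y) * (1 + ξ y) := by ring
    nlinarith
  have hanti : AntitoneOn w (Ici (0:ℝ)) := by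
    apply antitoneOn_of_deriv_nonpos (convex_Ici 0)
    · intro y hy
      exact ((hderiv y hy).choose_spec.1).continuousAt.continuousWithinAt
    · intro y hy
      rw [interior_Ici] at hy
      exact ((hderiv y hy.le).choose_spec.1).differentiableAt.differentiableWithinAt
    · intro y hy
      rw [interior_Ici] at hy
      obtain ⟨W, hW, hW0⟩ := hderiv y hy.le
      rw [hW.deriv]; exact hW0
  have hw0 : w 0 = 1 := by simp [hw, hzero]
  have hwx : w x ≤ 1 := hw0 ▸ hanti (le_refl (0:ℝ) : (0:ℝ) ∈ Ici (0:ℝ)) hx hx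
  have hP := hpos x hx
  have hE : 0 < Real.exp (2 * x / ε) := Real.exp_pos _
  have hQ : 0 ≤ 1 - ξ x := by have := (hrange x).2; linarith
  have h1 : (1 - ξ x) * Real.exp (2 * x / ε) ≤ 2 := by
    have h2 : (1 - ξ x) * Real.exp (2 * x / ε)
        = ((1 - ξ x) / (1 + ξ x) * Real.exp (2 * x / ε)) * (1 + ξ x) := by
      field_simp
    rw [h2]
    have h3 : ((1 - ξ x) / (1 + ξ x) * Real.exp (2 * x / ε)) * (1 + ξ x)
        ≤ 1 * (1 + ξ x) := mul_le_mul_of_nonneg_right hwx hP.le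
    have h4 : ξ x ≤ 1 := (hrange x).2
    linarith
  have harg : -2 * x / ε = -(2 * x / ε) := by ring
  rw [harg, Real.exp_neg, ← div_eq_mul_inv ..]
  rw [le_div_iff₀ hE]
  exact h1

/-- If `a·R₀/ε = π/2` then the profile reaches `1` at `R₀`. -/
lemma profile_hits (hε : 0 < ε) (hrange : ∀ x, ξ x ∈ Icc (-1:ℝ) 1) (hzero : ξ 0 = 0)
    (hode : ∀ x, HasDerivAt ξ
      (ε⁻¹ * Real.sqrt (1 - ξ x ^ 2) * Real.sqrt (1 - ξ x ^ 2 + a ^ 2)) x)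
    {R₀ : ℝ} (hR₀ : 0 < R₀) (haR : a * R₀ / ε = π / 2) : ξ R₀ = 1 := by
  by_contra hne
  have hmono := profile_mono hε hode
  have hnonneg : ∀ y : ℝ, 0 ≤ y → 0 ≤ ξ y := fun y hy => hzero ▸ hmono hy
  have hlt : ξ R₀ < 1 := lt_of_le_of_ne (hrange R₀).2 hne
  set h : ℝ → ℝ := fun y => Real.arcsin (ξ y) - a * y / ε with hh
  have hdiff : Differentiable ℝ ξ := fun x => (hode x).differentiableAt
  have hcont : Continuous h :=
    (Real.continuous_arcsin.comp hdiff.continuous).sub (by continuity)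
  have hmonoOn : MonotoneOn h (Icc 0 R₀) := by
    apply monotoneOn_of_deriv_nonneg (convex_Icc 0 R₀) hcont.continuousOn
    · intro y hy
      rw [interior_Icc] at hy
      have h0 : 0 ≤ ξ y := hnonneg y hy.1.le
      have h1 : ξ y < 1 := lt_of_le_of_lt (hmono hy.2.le) hlt
      have harc := (Real.hasDerivAt_arcsin (by linarith : ξ y ≠ -1) (ne_of_lt h1)).comp y (hode y)
      exact ((harc.sub ((hasDerivAt_id y).const_mul a
        |>.div_const ε)).differentiableAt).differentiableWithinAt
    · intro y hy
      rw [interior_Icc] at hy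
      have h0 : 0 ≤ ξ y := hnonneg y hy.1.le
      have h1 : ξ y < 1 := lt_of_le_of_lt (hmono hy.2.le) hlt
      have hsq : 0 < 1 - ξ y ^ 2 := by nlinarith
      have hs : 0 < Real.sqrt (1 - ξ y ^ 2) := Real.sqrt_pos.mpr hsq
      have harc := (Real.hasDerivAt_arcsin (by linarith : ξ y ≠ -1) (ne_of_lt h1)).comp y (hode y)
      have hlin : HasDerivAt (fun z : ℝ => a * z / ε) (a / ε) y := by
        simpa using ((hasDerivAt_id y).const_mul a).div_const ε
      have hder : HasDerivAt h
          (1 / Real.sqrt (1 - ξ y ^ 2) *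
            (ε⁻¹ * Real.sqrt (1 - ξ y ^ 2) * Real.sqrt (1 - ξ y ^ 2 + a ^ 2)) - a / ε) y :=
        harc.sub hlin
      rw [hder.deriv]
      have heq : 1 / Real.sqrt (1 - ξ y ^ 2) *
          (ε⁻¹ * Real.sqrt (1 - ξ y ^ 2) * Real.sqrt (1 - ξ y ^ 2 + a ^ 2))
          = ε⁻¹ * Real.sqrt (1 - ξ y ^ 2 + a ^ 2) := by
        field_simp
      rw [heq]
      have hge : |a| ≤ Real.sqrt (1 - ξ y ^ 2 + a ^ 2) := by
        rw [← Real.sqrt_sq_eq_abs]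
        exact Real.sqrt_le_sqrt (by nlinarith)
      have : a / ε ≤ ε⁻¹ * Real.sqrt (1 - ξ y ^ 2 + a ^ 2) := by
        rw [div_eq_inv_mul]
        apply mul_le_mul_of_nonneg_left _ (by positivity)
        exact (le_abs_self a).trans hge
      linarith
  have hend := hmonoOn ⟨le_refl 0, hR₀.le⟩ ⟨hR₀.le, le_refl R₀⟩ hR₀.le
  have hh0 : h 0 = 0 := by simp [hh, hzero]
  rw [hh0] at hend
  have : Real.arcsin (ξ R₀) < π / 2 := Real.arcsin_lt_pi_div_two.mpr hlt
  have : Real.arcsin (ξ R₀) - a * R₀ / ε ≥ 0 := hend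
  rw [haR] at this
  linarith

end profile

section uniq
variable {a ε : ℝ} {ξ₁ ξ₂ : ℝ → ℝ}

lemma profile_eqOn (hε : 0 < ε)
    (hz₁ : ξ₁ 0 = 0) (hz₂ : ξ₂ 0 = 0)
    (hode₁ : ∀ x, HasDerivAt ξ₁
      (ε⁻¹ * Real.sqrt (1 - ξ₁ x ^ 2) * Real.sqrt (1 - ξ₁ x ^ 2 + a ^ 2)) x)
    (hode₂ : ∀ x, HasDerivAt ξ₂
      (ε⁻¹ * Real.sqrt (1 - ξ₂ x ^ 2) * Real.sqrt (1 - ξ₂ x ^ 2 + a ^ 2)) x)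
    {c : ℝ} (hc : 0 ≤ c) (h1 : ξ₁ c < 1) (h2 : ξ₂ c < 1) :
    ∀ x ∈ Icc 0 c, ξ₁ x = ξ₂ x := by
  have hm₁ := profile_mono hε hode₁
  have hm₂ := profile_mono hε hode₂
  set m : ℝ := max (ξ₁ c) (ξ₂ c) with hm
  have hm0 : 0 ≤ m := le_max_of_le_left (hz₁ ▸ hm₁ hc)
  have hmlt : m < 1 := max_lt h1 h2
  obtain ⟨K, hK⟩ := lip_on_Icc' a ε m hε hm0 hmlt
  have key := ODE_solution_unique_of_mem_Icc_right (v := fun _ y =>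
        ε⁻¹ * Real.sqrt (1 - y ^ 2) * Real.sqrt (1 - y ^ 2 + a ^ 2))
      (s := fun _ => Icc 0 m) (K := K) (fun _ _ => hK)
      (f := ξ₁) (g := ξ₂) (a := 0) (b := c)
      (fun x _ => (hode₁ x).continuousAt.continuousWithinAt)
      (fun x _ => (hode₁ x).hasDerivWithinAt)
      (fun x hx => ⟨hz₁ ▸ hm₁ hx.1, le_max_of_le_left (hm₁ hx.2.le)⟩)
      (fun x _ => (hode₂ x).continuousAt.continuousWithinAt)
      (fun x _ => (hode₂ x).hasDerivWithinAt)
      (fun x hx => ⟨hz₂ ▸ hm₂ hx.1, le_max_of_le_right (hm₂ hx.2.le)⟩)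
      (hz₁.trans hz₂.symm)
  exact fun x hx => key hx

lemma profile_le (hε : 0 < ε)
    (hr₁ : ∀ x, ξ₁ x ∈ Icc (-1:ℝ) 1) (hz₁ : ξ₁ 0 = 0)
    (hode₁ : ∀ x, HasDerivAt ξ₁
      (ε⁻¹ * Real.sqrt (1 - ξ₁ x ^ 2) * Real.sqrt (1 - ξ₁ x ^ 2 + a ^ 2)) x)
    (hz₂ : ξ₂ 0 = 0)
    (hode₂ : ∀ x, HasDerivAt ξ₂
      (ε⁻¹ * Real.sqrt (1 - ξ₂ x ^ 2) * Real.sqrt (1 - ξ₂ x ^ 2 + a ^ 2)) x)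
    {x₀ : ℝ} (hx₀ : 0 ≤ x₀) : ξ₁ x₀ ≤ ξ₂ x₀ := by
  by_contra hlt
  push_neg at hlt
  have hm₁ := profile_mono hε hode₁
  have hm₂ := profile_mono hε hode₂
  have hd₁ : Differentiable ℝ ξ₁ := fun x => (hode₁ x).differentiableAt
  have hd₂ : Differentiable ℝ ξ₂ := fun x => (hode₂ x).differentiableAt
  have hcont₁ : Continuous ξ₁ := hd₁.continuous
  have hcont₂ : Continuous ξ₂ := hd₂.continuous
  have h2lt : ξ₂ x₀ < 1 := lt_of_lt_of_le hlt (hr₁ x₀).2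
  by_cases h1lt : ξ₁ x₀ < 1
  · have := profile_eqOn hε hz₁ hz₂ hode₁ hode₂ hx₀ h1lt h2lt x₀ ⟨hx₀, le_refl _⟩
    linarith
  · have h1eq : ξ₁ x₀ = 1 := le_antisymm (hr₁ x₀).2 (not_lt.mp h1lt)
    set S : Set ℝ := Icc 0 x₀ ∩ ξ₁ ⁻¹' {1} with hS
    have hScl : IsClosed S := isClosed_Icc.inter (isClosed_singleton.preimage hcont₁)
    have hSne : S.Nonempty := ⟨x₀, ⟨hx₀, le_refl _⟩, h1eq⟩
    have hSbd : BddBelow S := (bddBelow_Icc : BddBelow (Icc (0:ℝ) x₀)).mono inter_subset_left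
    set c : ℝ := sInf S with hc
    have hcS : c ∈ S := hScl.csInf_mem hSne hSbd
    have hc0 : 0 ≤ c := hcS.1.1
    have hcx₀ : c ≤ x₀ := hcS.1.2
    have hξ₁c : ξ₁ c = 1 := hcS.2
    have hcpos : 0 < c := by
      rcases eq_or_lt_of_le hc0 with h | h
      · exfalso; rw [← h] at hξ₁c; rw [hz₁] at hξ₁c; norm_num at hξ₁c
      · exact h
    have heqon : Set.EqOn ξ₁ ξ₂ (Ico 0 c) := by
      intro x hx
      have hx1 : ξ₁ x < 1 := by
        rcases lt_or_eq_of_le (le_trans (hm₁ hx.2.le) (le_of_eq hξ₁c)) with h | h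
        · exact h
        · exfalso
          have : x ∈ S := ⟨⟨hx.1, hx.2.le.trans hcx₀⟩, h⟩
          exact absurd (csInf_le hSbd this) (not_le.mpr hx.2)
      have hx2 : ξ₂ x < 1 := lt_of_le_of_lt (hm₂ (hx.2.le.trans hcx₀)) h2lt
      exact profile_eqOn hε hz₁ hz₂ hode₁ hode₂ hx.1 hx1 hx2 x ⟨hx.1, le_refl _⟩
    have hclosure : Set.EqOn ξ₁ ξ₂ (closure (Ico 0 c)) :=
      heqon.closure hcont₁ hcont₂
    have hcc : c ∈ closure (Ico 0 c) := by
      rw [closure_Ico (ne_of_lt hcpos)]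
      exact ⟨hc0, le_refl _⟩
    have h2c : ξ₂ c = 1 := (hclosure hcc).symm.trans hξ₁c
    have : ξ₂ c ≤ ξ₂ x₀ := hm₂ hcx₀
    linarith

end uniq

/-- Lemma `le:opt`, first part: qualitative properties of the optimal
one-dimensional transition profile `ξ_{ε,R}`. -/
theorem stmt_6 (R : ℝ≥0∞) (hR : 0 < R) (ε : ℝ) (hε : 0 < ε)
    (ξ : ℝ → ℝ) (hrange : ∀ x, ξ x ∈ Set.Icc (-1 : ℝ) 1) (hzero : ξ 0 = 0)
    (hode : ∀ x, HasDerivAt ξ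
      (ε⁻¹ * Real.sqrt (1 - ξ x ^ 2) *
        Real.sqrt (1 - ξ x ^ 2 + odeCoeff ε R ^ 2)) x) :
    Monotone ξ ∧ (∀ x, ξ (-x) = -ξ x) ∧
      (∀ x, |ξ x - Real.sign x| ≤ 2 * Real.exp (-2 * |x| / ε)) ∧
      (R ≠ ⊤ → ∃ η : ℝ, 0 < η ∧ η ≤ R.toReal ∧
        (∀ x, η ≤ x → ξ x = 1) ∧ (∀ x, x ≤ -η → ξ x = -1)) := by
  set a : ℝ := odeCoeff ε R with ha
  have hmono : Monotone ξ := profile_mono hε hode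
  -- the reflected function
  set g : ℝ → ℝ := fun x => -ξ (-x) with hg
  have hgrange : ∀ x, g x ∈ Set.Icc (-1:ℝ) 1 := by
    intro x
    have h1 := (hrange (-x)).1
    have h2 := (hrange (-x)).2
    constructor <;> simp only [hg] <;> linarith
  have hgzero : g 0 = 0 := by simp [hg, hzero]
  have hgode : ∀ x, HasDerivAt g
      (ε⁻¹ * Real.sqrt (1 - g x ^ 2) * Real.sqrt (1 - g x ^ 2 + a ^ 2)) x := by
    intro x
    have hx2 : g x ^ 2 = ξ (-x) ^ 2 := by simp [hg, neg_sq]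
    rw [hx2]
    have h1 := (hode (-x)).comp x (hasDerivAt_neg x)
    have h2 := h1.neg
    have heq : -(ε⁻¹ * Real.sqrt (1 - ξ (-x) ^ 2) * Real.sqrt (1 - ξ (-x) ^ 2 + a ^ 2) * (-1))
        = ε⁻¹ * Real.sqrt (1 - ξ (-x) ^ 2) * Real.sqrt (1 - ξ (-x) ^ 2 + a ^ 2) := by ring
    rw [heq] at h2
    exact h2
  have huniq : ∀ x, 0 ≤ x → ξ x = g x := fun x hx =>
    le_antisymm (profile_le hε hrange hzero hode hgzero hgode hx)
      (profile_le hε hgrange hgzero hgode hzero hode hx)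
  have hodd : ∀ x, ξ (-x) = -ξ x := by
    intro x
    rcases le_total 0 x with h | h
    · have := huniq x h
      simp only [hg] at this
      linarith
    · have := huniq (-x) (neg_nonneg.mpr h)
      simp only [hg, neg_neg] at this
      linarith
  refine ⟨hmono, hodd, ?_, ?_⟩
  · intro x
    rcases lt_trichotomy x 0 with hx | hx | hx
    · rw [Real.sign_of_neg hx, abs_of_neg hx]
      have h := profile_decay hε hrange hzero hode (by linarith : (0:ℝ) ≤ -x)
      have hx' : ξ x = -ξ (-x) := by have := hodd x; linarith
      have h2 := (hrange (-x)).2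
      have habs : |ξ x - (-1)| = 1 - ξ (-x) := by
        rw [hx', abs_of_nonneg (by linarith)]
        ring
      rw [habs]
      exact h
    · subst hx
      simp only [Real.sign_zero, hzero, sub_zero, abs_zero, abs_of_nonneg (le_refl (0:ℝ))]
      positivity
    · rw [Real.sign_of_pos hx, abs_of_pos hx]
      have h := profile_decay hε hrange hzero hode hx.le
      have h2 := (hrange x).2
      have habs : |ξ x - 1| = 1 - ξ x := by
        rw [abs_of_nonpos (by linarith)]
        ring
      rw [habs]
      exact h
  · intro htop
    have hR₀ : 0 < R.toReal := ENNReal.toReal_pos hR.ne' htop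
    have haval : a = π * ε / (2 * R.toReal) := by rw [ha, odeCoeff, if_neg htop]
    have haR : a * R.toReal / ε = π / 2 := by
      rw [haval]
      field_simp
    have h1 : ξ R.toReal = 1 := profile_hits hε hrange hzero hode hR₀ haR
    refine ⟨R.toReal, hR₀, le_refl _, ?_, ?_⟩
    · intro x hx
      exact le_antisymm (hrange x).2 (h1 ▸ hmono hx)
    · intro x hx
      have h2 : ξ (-x) = 1 := le_antisymm (hrange (-x)).2 (h1 ▸ hmono (by linarith))
      have := hodd x
      linarith

end
end

section
/- For R ∈ (0, ∞) and ε > 0, let ξ_{ε,R} : ℝ → [−1,1] be the unique solution of ξ_{ε,R}(0) = 0, ξ_{ε,R}' = (1/ε)(1 − ξ_{ε,R}²)^{1/2}(1 − ξ_{ε,R}² + (πε/(2R))²)^{1/2}, and let η_{ε,R} ∈ (0, R] be the first point where ξ_{ε,R} reaches 1. Then the local transition energy satisfies (1/2) ∫_{−η_{ε,R}}^{η_{ε,R}} ( ε |ξ_{ε,R}'|²/(1 − ξ_{ε,R}²) + (1 − ξ_{ε,R}²)/ε ) dx ≤ 2 + π²ε/(4R). -/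
open Real MeasureTheory

/- Writing `c = πε/(2R)`, the ODE gives the exact identity `ε ξ'²/(1 - ξ²) = (1 - ξ² + c²)/ε`, while
`(1 - ξ²)/ε ≤ ξ'`. Hence the energy density is at most `2ξ' + c²/ε`; integrating over `(-η, η)`
gives at most `2(ξ(η) - ξ(-η)) + 2ηc²/ε ≤ 4 + 2Rc²/ε`. -/

lemma mul_sq_div_add_div_le_two_mul_add {ε a c d : ℝ} (hε : 0 < ε) (ha : 0 ≤ a)
    (hd : d = ε⁻¹ * √a * √(a + c ^ 2)) :
    ε * d ^ 2 / a + a / ε ≤ 2 * d + c ^ 2 / ε := by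
  rcases ha.eq_or_lt with rfl | ha
  · simp only [hd, sqrt_zero, mul_zero, zero_mul, zero_div, add_zero, zero_pow two_ne_zero]
    positivity
  have hkinetic : ε * d ^ 2 / a = (a + c ^ 2) / ε := by
    rw [hd, mul_pow, mul_pow, sq_sqrt ha.le, sq_sqrt (by positivity)]
    field_simp
  have hpotential : a / ε ≤ d := calc
    a / ε = ε⁻¹ * √a * √a := by rw [mul_assoc, mul_self_sqrt ha.le, inv_mul_eq_div]
    _ ≤ d := by rw [hd]; gcongr; linarith [sq_nonneg c]
  rw [hkinetic, add_div]
  linarith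

lemma setIntegral_Ioo_le_sub_add_mul_of_le_deriv_add {f g g' : ℝ → ℝ} {a b K : ℝ} (hab : a ≤ b)
    (hg : ∀ x, HasDerivAt g (g' x) x) (hg' : IntervalIntegrable g' volume a b)
    (hf₀ : ∀ x, 0 ≤ f x) (hf : ∀ x, f x ≤ g' x + K) :
    ∫ x in Set.Ioo a b, f x ≤ g b - g a + K * (b - a) := by
  have hint : IntervalIntegrable (fun x => g' x + K) volume a b := hg'.add intervalIntegrable_const
  calc ∫ x in Set.Ioo a b, f x ≤ ∫ x in Set.Ioo a b, (g' x + K) :=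
        setIntegral_mono_of_nonneg (fun x _ => hf₀ x) (fun x _ => hf x)
          (hint.1.mono_set Set.Ioo_subset_Ioc_self)
    _ = ∫ x in a..b, (g' x + K) := by
        rw [← integral_Ioc_eq_integral_Ioo, intervalIntegral.integral_of_le hab]
    _ = g b - g a + K * (b - a) := by
        rw [intervalIntegral.integral_add hg' intervalIntegrable_const,
          intervalIntegral.integral_eq_sub_of_hasDerivAt (fun x _ => hg x) hg',
          intervalIntegral.integral_const, smul_eq_mul, mul_comm]

theorem stmt_7_general (R : ℝ) (hR : 0 < R) (ε : ℝ) (hε : 0 < ε)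
    (ξ : ℝ → ℝ) (hrange : ∀ x, ξ x ∈ Set.Icc (-1 : ℝ) 1)
    (hode : ∀ x, HasDerivAt ξ
      (ε⁻¹ * Real.sqrt (1 - ξ x ^ 2) *
        Real.sqrt (1 - ξ x ^ 2 + (π * ε / (2 * R)) ^ 2)) x)
    (η : ℝ) (hη0 : 0 < η) (hηR : η ≤ R) (hη1 : ξ η = 1) :
    (1 / 2) * ∫ x in Set.Ioo (-η) η,
        (ε * (deriv ξ x) ^ 2 / (1 - ξ x ^ 2) + (1 - ξ x ^ 2) / ε)
      ≤ 2 + π ^ 2 * ε / (4 * R) := by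
  set c := π * ε / (2 * R) with hc_def
  simp only [show deriv ξ = _ from funext fun x => (hode x).deriv]
  have hgap : ∀ x, 0 ≤ 1 - ξ x ^ 2 := fun x => by
    nlinarith [(hrange x).1, (hrange x).2]
  have hspeed : Continuous fun x => ε⁻¹ * √(1 - ξ x ^ 2) * √(1 - ξ x ^ 2 + c ^ 2) := by
    have : Continuous ξ := continuous_iff_continuousAt.2 fun x => (hode x).continuousAt
    fun_prop
  have henergy := setIntegral_Ioo_le_sub_add_mul_of_le_deriv_add (K := c ^ 2 / ε)
    (by linarith : -η ≤ η) (fun x => (hode x).const_mul 2)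
    ((continuous_const.mul hspeed).intervalIntegrable _ _)
    (fun x => by have := hgap x; positivity)
    (fun x => mul_sq_div_add_div_le_two_mul_add hε (hgap x) rfl)
  have hc : c ^ 2 / ε * (η - -η) ≤ 2 * (π ^ 2 * ε / (4 * R)) := calc
    c ^ 2 / ε * (η - -η) ≤ c ^ 2 / ε * (2 * R) := by gcongr; linarith
    _ = 2 * (π ^ 2 * ε / (4 * R)) := by rw [hc_def]; field_simp; norm_num
  linarith [(hrange (-η)).1]

/-- Lemma `le:opt`, local energy estimate: the transition energy of the
optimal profile `ξ_{ε,R}` on `(-η,η)` is at most `2 + π²ε/(4R)`. -/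
theorem stmt_7 (R : ℝ) (hR : 0 < R) (ε : ℝ) (hε : 0 < ε)
    (ξ : ℝ → ℝ) (hrange : ∀ x, ξ x ∈ Set.Icc (-1 : ℝ) 1) (hzero : ξ 0 = 0)
    (hode : ∀ x, HasDerivAt ξ
      (ε⁻¹ * Real.sqrt (1 - ξ x ^ 2) *
        Real.sqrt (1 - ξ x ^ 2 + (π * ε / (2 * R)) ^ 2)) x)
    (η : ℝ) (hη0 : 0 < η) (hηR : η ≤ R) (hη1 : ξ η = 1)
    (hηfirst : ∀ x, 0 ≤ x → x < η → ξ x < 1) :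
    (1 / 2) * ∫ x in Set.Ioo (-η) η,
        (ε * (deriv ξ x) ^ 2 / (1 - ξ x ^ 2) + (1 - ξ x ^ 2) / ε)
      ≤ 2 + π ^ 2 * ε / (4 * R) :=
  stmt_7_general R hR ε hε ξ hrange hode η hη0 hηR hη1
end

section
/- There exists a universal constant c > 0 with the following property: for every R ∈ (0, ∞], every ε > 0 and every X ≥ 2ε, the solution ξ_{ε,R} of the initial value problem ξ_{ε,R}(0) = 0, ξ_{ε,R}' = (1/ε)(1 − ξ_{ε,R}²)^{1/2}(1 − ξ_{ε,R}² + (πε/(2R))²)^{1/2} satisfies the nonlocal lower bound ∫_{−X}^{X} ∫_{−X}^{X} |ξ_{ε,R}(x) − ξ_{ε,R}(y)|²/|x−y|² dx dy ≥ 8 log(c X/ε). -/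
open Real MeasureTheory ENNReal

noncomputable section

/-!
The right-hand side of the ODE is at least `(1 - ξ²)/ε`, so `ξ` is a supersolution of the
equation solved by `tanh (x/ε)`. Since `ξ - tanh (·/ε)` satisfies a linear differential
inequality and vanishes at `0`, an integrating factor gives `ξ ≥ tanh (·/ε)` on `[0, ∞)`
and `ξ ≤ tanh (·/ε)` on `(-∞, 0]`; hence `1 - ξ x ≤ 2 e^{-2x/ε}` and
`1 + ξ (-x) ≤ 2 e^{-2x/ε}` for `x ≥ 0`. On the quadrant `{x ≥ ε, y ≤ -ε}` this yields
`(ξ x - ξ y)² ≥ 4 - 8 e^{-2x/ε} - 8 e^{2y/ε}`: the main term `4/(x-y)²` integrates to at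
least `4 log (X/4ε)`, the exponential terms to at most `4 e^{-2}`, and the quadrant and its
mirror image together give the factor `8`. Since `ξ` is Lipschitz, the integrand is bounded,
which justifies passing between iterated integrals and integrals over the product.
-/

open Set

theorem Real.hasDerivAt_tanh (x : ℝ) : HasDerivAt tanh (1 - tanh x ^ 2) x := by
  have h := (hasDerivAt_sinh x).div (hasDerivAt_cosh x) (cosh_pos x).ne'
  rw [show sinh / cosh = tanh from funext fun y => (tanh_eq_sinh_div_cosh y).symm] at h
  refine h.congr_deriv ?_
  rw [tanh_eq_sinh_div_cosh]
  field_simp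

theorem Real.one_sub_tanh_le (x : ℝ) : 1 - tanh x ≤ 2 * exp (-2 * x) := by
  have hcosh : exp x / 2 ≤ cosh x := by rw [cosh_eq]; linarith [exp_pos (-x)]
  calc 1 - tanh x = exp (-x) / cosh x := by
        rw [tanh_eq_sinh_div_cosh, ← cosh_sub_sinh]; field_simp [(cosh_pos x).ne']
    _ ≤ exp (-x) / (exp x / 2) := by gcongr
    _ = 2 * exp (-2 * x) := by rw [show -2 * x = -x - x by ring, exp_sub]; ring

section Comparison

variable {u u' k : ℝ → ℝ}

theorem monotone_mul_exp_neg_integral (hu : ∀ x, HasDerivAt u (u' x) x) (hk : Continuous k)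
    (h : ∀ x, k x * u x ≤ u' x) :
    Monotone fun x => u x * exp (-∫ t in (0 : ℝ)..x, k t) := by
  have hF (x : ℝ) : HasDerivAt (fun x => u x * exp (-∫ t in (0 : ℝ)..x, k t))
      (u' x * exp (-∫ t in (0 : ℝ)..x, k t)
        + u x * (exp (-∫ t in (0 : ℝ)..x, k t) * -k x)) x :=
    (hu x).mul (hk.integral_hasStrictDerivAt 0 x).hasDerivAt.neg.exp
  refine monotone_of_deriv_nonneg (fun x => (hF x).differentiableAt) fun x => ?_
  rw [(hF x).deriv]
  nlinarith [h x, exp_pos (-∫ t in (0 : ℝ)..x, k t)]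

theorem sign_of_mul_le_deriv (hu : ∀ x, HasDerivAt u (u' x) x) (hk : Continuous k)
    (h : ∀ x, k x * u x ≤ u' x) (h0 : u 0 = 0) (x : ℝ) :
    (0 ≤ x → 0 ≤ u x) ∧ (x ≤ 0 → u x ≤ 0) := by
  have hmono := monotone_mul_exp_neg_integral hu hk h
  have hpos := exp_pos (-∫ t in (0 : ℝ)..x, k t)
  refine ⟨fun hx => ?_, fun hx => ?_⟩
  · have h1 : u 0 * _ ≤ u x * _ := hmono hx
    rw [h0, zero_mul] at h1
    exact nonneg_of_mul_nonneg_left h1 hpos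
  · have h1 : u x * _ ≤ u 0 * _ := hmono hx
    rw [h0, zero_mul] at h1
    exact nonpos_of_mul_nonpos_left h1 hpos

theorem tanh_comparison {ε : ℝ} {ξ ξ' : ℝ → ℝ} (hξ : ∀ x, HasDerivAt ξ (ξ' x) x)
    (hsuper : ∀ x, (1 - ξ x ^ 2) / ε ≤ ξ' x) (h0 : ξ 0 = 0) (x : ℝ) :
    (0 ≤ x → tanh (x / ε) ≤ ξ x) ∧ (x ≤ 0 → ξ x ≤ tanh (x / ε)) := by
  have hτ (x : ℝ) : HasDerivAt (fun x => tanh (x / ε)) ((1 - tanh (x / ε) ^ 2) / ε) x := by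
    have h := (hasDerivAt_tanh (x / ε)).comp x ((hasDerivAt_id x).div_const ε)
    exact h.congr_deriv (by simp [div_eq_mul_inv])
  have hξc : Continuous ξ := continuous_iff_continuousAt.2 fun x => (hξ x).continuousAt
  have hτc : Continuous fun x => tanh (x / ε) :=
    continuous_iff_continuousAt.2 fun x => (hτ x).continuousAt
  have hlin (x : ℝ) : -(ξ x + tanh (x / ε)) / ε * (ξ x - tanh (x / ε))
      ≤ ξ' x - (1 - tanh (x / ε) ^ 2) / ε := by
    have : -(ξ x + tanh (x / ε)) / ε * (ξ x - tanh (x / ε))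
        = (1 - ξ x ^ 2) / ε - (1 - tanh (x / ε) ^ 2) / ε := by ring
    linarith [hsuper x]
  have hsign := sign_of_mul_le_deriv (u := fun x => ξ x - tanh (x / ε))
    (fun x => (hξ x).sub (hτ x)) ((hξc.add hτc).neg.div_const ε) hlin (by simp [h0]) x
  exact ⟨fun hx => sub_nonneg.1 (hsign.1 hx), fun hx => sub_nonpos.1 (hsign.2 hx)⟩

end Comparison

section ProfileODE

variable {ε s : ℝ} (a : ℝ)

theorem div_le_inv_mul_sqrt_mul_sqrt (hε : 0 ≤ ε) (hs : 0 ≤ s) :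
    s / ε ≤ ε⁻¹ * √s * √(s + a ^ 2) := by
  have h : √s * √s ≤ √s * √(s + a ^ 2) := by gcongr; linarith [sq_nonneg a]
  rw [Real.mul_self_sqrt hs] at h
  rw [div_eq_inv_mul, mul_assoc]
  exact mul_le_mul_of_nonneg_left h (inv_nonneg.2 hε)

theorem abs_inv_mul_sqrt_mul_sqrt_le (hε : 0 ≤ ε) (hs : s ≤ 1) :
    |ε⁻¹ * √s * √(s + a ^ 2)| ≤ ε⁻¹ * √(1 + a ^ 2) := by
  rw [abs_of_nonneg (by positivity)]
  calc ε⁻¹ * √s * √(s + a ^ 2) ≤ ε⁻¹ * 1 * √(1 + a ^ 2) := by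
        gcongr
        exact Real.sqrt_le_one.2 hs
    _ = ε⁻¹ * √(1 + a ^ 2) := by rw [mul_one]

end ProfileODE

theorem lipschitzWith_of_abs_hasDerivAt_le {f f' : ℝ → ℝ} {C : NNReal}
    (hf : ∀ x, HasDerivAt f (f' x) x) (hC : ∀ x, |f' x| ≤ C) : LipschitzWith C f :=
  lipschitzWith_of_nnnorm_deriv_le (fun x => (hf x).differentiableAt) fun x => by
    rw [(hf x).deriv, ← NNReal.coe_le_coe, coe_nnnorm, Real.norm_eq_abs]
    exact hC x

section IntervalIntegrals

variable {a b c : ℝ}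

theorem integral_inv_add (ha : 0 < a + c) (hb : 0 < b + c) :
    ∫ x in a..b, (x + c)⁻¹ = log ((b + c) / (a + c)) := by
  rw [intervalIntegral.integral_comp_add_right (fun x => x⁻¹), integral_inv_of_pos ha hb]

theorem integral_inv_add_sq (ha : 0 < a + c) (hb : 0 < b + c) :
    ∫ x in a..b, ((x + c) ^ 2)⁻¹ = (a + c)⁻¹ - (b + c)⁻¹ := by
  have h0 : (0 : ℝ) ∉ uIcc (a + c) (b + c) := by
    rw [mem_uIcc]; rintro (⟨h, -⟩ | ⟨h, -⟩) <;> linarith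
  rw [intervalIntegral.integral_comp_add_right (fun x => (x ^ 2)⁻¹)]
  have h := integral_zpow (n := -2) (Or.inr ⟨by norm_num, h0⟩)
  simp only [zpow_neg, zpow_ofNat] at h
  rw [h]
  norm_num
  ring

theorem intervalIntegrable_inv_add (hab : a ≤ b) (hc : 0 < a + c) :
    IntervalIntegrable (fun x => (x + c)⁻¹) volume a b := by
  refine (ContinuousOn.inv₀ (by fun_prop) fun x hx => ?_).intervalIntegrable
  rw [uIcc_of_le hab] at hx
  linarith [hx.1]

theorem intervalIntegrable_inv_add_sq (hab : a ≤ b) (hc : 0 < a + c) :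
    IntervalIntegrable (fun x => ((x + c) ^ 2)⁻¹) volume a b := by
  refine (ContinuousOn.inv₀ (by fun_prop) fun x hx => pow_ne_zero 2 ?_).intervalIntegrable
  rw [uIcc_of_le hab] at hx
  linarith [hx.1]

theorem integral_exp_mul (hc : c ≠ 0) (a b : ℝ) :
    ∫ x in a..b, exp (c * x) = (exp (c * b) - exp (c * a)) / c := by
  rw [intervalIntegral.integral_comp_mul_left (fun x => exp x) hc, integral_exp, smul_eq_mul,
    inv_mul_eq_div]

end IntervalIntegrals

section Square

variable {ε X : ℝ} {f g : ℝ → ℝ}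

theorem integral_exp_neg_two_div_mul_le (hε : 0 < ε) :
    ∫ y in ε..X, exp (-2 / ε * y) ≤ ε / 2 * exp (-2) := by
  have hεε : -2 / ε * ε = -2 := by field_simp
  have hval : (exp (-2 / ε * X) - exp (-2 / ε * ε)) / (-2 / ε)
      = ε / 2 * (exp (-2) - exp (-2 / ε * X)) := by
    rw [hεε]; field_simp; ring
  rw [integral_exp_mul (div_ne_zero (by norm_num) hε.ne'), hval]
  nlinarith [exp_pos (-2 / ε * X)]

theorem le_sq_add_div_sq_of_one_sub_le {x y s t : ℝ} (hε : 0 < ε) (hx : ε ≤ x)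
    (hy : ε ≤ y) (hs : 1 - s ≤ 2 * exp (-2 / ε * x)) (ht : 1 - t ≤ 2 * exp (-2 / ε * y)) :
    4 * ((y + x) ^ 2)⁻¹ - 8 * exp (-2 / ε * x) * ((y + ε) ^ 2)⁻¹
      - 8 * ((x + ε) ^ 2)⁻¹ * exp (-2 / ε * y) ≤ (s + t) ^ 2 / (x + y) ^ 2 := by
  -- `(s + t) ^ 2 = (2 - r) ^ 2 ≥ 4 - 4 r` with `r = (1 - s) + (1 - t)`
  have hsq : 4 - 8 * exp (-2 / ε * x) - 8 * exp (-2 / ε * y) ≤ (s + t) ^ 2 := by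
    nlinarith [sq_nonneg (2 - s - t)]
  have hw₁ : ((x + y) ^ 2)⁻¹ ≤ ((y + ε) ^ 2)⁻¹ :=
    inv_anti₀ (pow_pos (by linarith) 2) (pow_le_pow_left₀ (by linarith) (by linarith) 2)
  have hw₂ : ((x + y) ^ 2)⁻¹ ≤ ((x + ε) ^ 2)⁻¹ :=
    inv_anti₀ (pow_pos (by linarith) 2) (pow_le_pow_left₀ (by linarith) (by linarith) 2)
  have hu := mul_le_mul_of_nonneg_left hw₁ (by positivity : 0 ≤ 8 * exp (-2 / ε * x))
  have hv := mul_le_mul_of_nonneg_left hw₂ (by positivity : 0 ≤ 8 * exp (-2 / ε * y))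
  rw [div_eq_mul_inv ((s + t) ^ 2), add_comm y x]
  nlinarith [mul_le_mul_of_nonneg_right hsq (inv_nonneg.2 (sq_nonneg (x + y)))]

/-- The integral over `y ∈ [ε, X]` of the main term `4 / (x + y) ^ 2`, minus bounds for the
integrals of the two exponential error terms. -/
def squareInnerBound (ε X x : ℝ) : ℝ :=
  4 * ((x + ε)⁻¹ - (x + X)⁻¹) - 4 / ε * exp (-2 / ε * x)
    - 4 * ε * exp (-2) * ((x + ε) ^ 2)⁻¹

theorem intervalIntegrable_squareInnerBound (hε : 0 < ε) (hεX : ε ≤ X) :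
    IntervalIntegrable (squareInnerBound ε X) volume ε X := by
  have hexp : Continuous fun x => exp (-2 / ε * x) := by fun_prop
  exact ((intervalIntegrable_inv_add hεX (by linarith)).sub
    (intervalIntegrable_inv_add hεX (by linarith))).const_mul 4
    |>.sub ((hexp.intervalIntegrable ε X).const_mul _)
    |>.sub ((intervalIntegrable_inv_add_sq hεX (by linarith)).const_mul _)

theorem squareInnerBound_le_integral (hε : 0 < ε) (hεX : ε ≤ X) (hg : Continuous g)
    (hf1 : ∀ x, ε ≤ x → 1 - f x ≤ 2 * exp (-2 / ε * x))
    (hg1 : ∀ y, ε ≤ y → 1 - g y ≤ 2 * exp (-2 / ε * y)) {x : ℝ} (hx : ε ≤ x) :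
    squareInnerBound ε X x ≤ ∫ y in ε..X, (f x + g y) ^ 2 / (x + y) ^ 2 := by
  set u := exp (-2 / ε * x)
  have hI (c : ℝ) (hc : 0 < ε + c) := intervalIntegrable_inv_add_sq (b := X) hεX hc
  have hexp : IntervalIntegrable (fun y => exp (-2 / ε * y)) volume ε X :=
    (by fun_prop : Continuous fun y => exp (-2 / ε * y)).intervalIntegrable ε X
  have hκ := ((hI x (by linarith)).const_mul 4).sub ((hI ε (by linarith)).const_mul (8 * u))
  have hmono := intervalIntegral.integral_mono_on hεX
    (hκ.sub (hexp.const_mul (8 * ((x + ε) ^ 2)⁻¹)))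
    (by apply ContinuousOn.intervalIntegrable
        fun_prop (disch := intro y hy; apply pow_ne_zero; apply ne_of_gt
                           linarith [(uIcc_of_le hεX ▸ hy).1]))
    (fun y hy => le_sq_add_div_sq_of_one_sub_le hε hx hy.1 (hf1 x hx) (hg1 y hy.1))
  rw [intervalIntegral.integral_sub hκ (hexp.const_mul _),
    intervalIntegral.integral_sub ((hI x (by linarith)).const_mul 4)
      ((hI ε (by linarith)).const_mul (8 * u)),
    intervalIntegral.integral_const_mul, intervalIntegral.integral_const_mul,
    intervalIntegral.integral_const_mul, integral_inv_add_sq (by linarith) (by linarith),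
    integral_inv_add_sq (by linarith) (by linarith), add_comm ε x, add_comm X x] at hmono
  have hE := mul_le_mul_of_nonneg_left (integral_exp_neg_two_div_mul_le (X := X) hε)
    (by positivity : (0 : ℝ) ≤ 8 * ((x + ε) ^ 2)⁻¹)
  have hεε : 8 * u * (ε + ε)⁻¹ = 4 / ε * u := by field_simp; ring
  have hXε : 0 ≤ 8 * u * (X + ε)⁻¹ := mul_nonneg (by positivity) (inv_nonneg.2 (by linarith))
  unfold squareInnerBound
  linarith

theorem log_sub_le_integral_squareInnerBound (hε : 0 < ε) (hεX : ε ≤ X) :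
    4 * Real.log (X / (4 * ε)) - 4 * exp (-2) ≤ ∫ x in ε..X, squareInnerBound ε X x := by
  have hI (c : ℝ) (hc : 0 < ε + c) := intervalIntegrable_inv_add (b := X) hεX hc
  have hI₂ := intervalIntegrable_inv_add_sq (b := X) (c := ε) hεX (by linarith)
  have hexp : IntervalIntegrable (fun x => exp (-2 / ε * x)) volume ε X :=
    (by fun_prop : Continuous fun x => exp (-2 / ε * x)).intervalIntegrable ε X
  have hlog := ((hI ε (by linarith)).sub (hI X (by linarith))).const_mul 4
  unfold squareInnerBound
  rw [intervalIntegral.integral_sub (hlog.sub (hexp.const_mul _)) (hI₂.const_mul _),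
    intervalIntegral.integral_sub hlog (hexp.const_mul _),
    intervalIntegral.integral_const_mul, intervalIntegral.integral_const_mul,
    intervalIntegral.integral_const_mul,
    intervalIntegral.integral_sub (hI ε (by linarith)) (hI X (by linarith)),
    integral_inv_add (by linarith) (by linarith), integral_inv_add (by linarith) (by linarith),
    integral_inv_add_sq (by linarith) (by linarith)]
  have hX : 0 < X := by linarith
  have hlog₁ : Real.log (X / (2 * ε)) ≤ Real.log ((X + ε) / (ε + ε)) := by
    rw [two_mul]; gcongr; linarith
  have hlog₂ : Real.log ((X + X) / (ε + X)) ≤ Real.log 2 := by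
    gcongr
    rw [div_le_iff₀ (by linarith)]; linarith
  have hlog₃ : Real.log (X / (4 * ε)) = Real.log (X / (2 * ε)) - Real.log 2 := by
    rw [← Real.log_div (by positivity) (by norm_num)]; congr 1; field_simp; norm_num
  have hE := mul_le_mul_of_nonneg_left (integral_exp_neg_two_div_mul_le (X := X) hε)
    (by positivity : (0 : ℝ) ≤ 4 / ε)
  have hεε : 4 / ε * (ε / 2 * exp (-2)) = 2 * exp (-2) := by field_simp; ring
  have hXε : 0 ≤ 4 * ε * exp (-2) * (X + ε)⁻¹ :=
    mul_nonneg (by positivity) (inv_nonneg.2 (by linarith))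
  have hεε' : 4 * ε * exp (-2) * (ε + ε)⁻¹ = 2 * exp (-2) := by field_simp; ring
  linarith

theorem log_sub_le_integral_square (hε : 0 < ε) (hεX : ε ≤ X) (hf : Continuous f)
    (hg : Continuous g) (hf1 : ∀ x, ε ≤ x → 1 - f x ≤ 2 * exp (-2 / ε * x))
    (hg1 : ∀ y, ε ≤ y → 1 - g y ≤ 2 * exp (-2 / ε * y)) :
    4 * Real.log (X / (4 * ε)) - 4 * exp (-2) ≤
      ∫ x in Ioo ε X, ∫ y in Ioo ε X, (f x + g y) ^ 2 / (x + y) ^ 2 := by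
  have hcont : ContinuousOn (fun p : ℝ × ℝ => (f p.1 + g p.2) ^ 2 / (p.1 + p.2) ^ 2)
      (Icc ε X ×ˢ Icc ε X) := by
    fun_prop (disch := rintro p ⟨hp₁, hp₂⟩; apply pow_ne_zero; apply ne_of_gt
                       linarith [hp₁.1, hp₂.1])
  have hint : Integrable (fun p : ℝ × ℝ => (f p.1 + g p.2) ^ 2 / (p.1 + p.2) ^ 2)
      ((volume.restrict (Ioc ε X)).prod (volume.restrict (Ioc ε X))) := by
    rw [Measure.prod_restrict, ← Measure.volume_eq_prod]
    exact (hcont.integrableOn_compact (isCompact_Icc.prod isCompact_Icc)).mono_set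
      (prod_mono Ioc_subset_Icc_self Ioc_subset_Icc_self)
  have hinner : IntervalIntegrable (fun x => ∫ y in ε..X, (f x + g y) ^ 2 / (x + y) ^ 2)
      volume ε X := by
    simp only [intervalIntegral.integral_of_le hεX]
    exact (intervalIntegrable_iff_integrableOn_Ioc_of_le hεX).2 hint.integral_prod_left
  simp only [← integral_Ioc_eq_integral_Ioo, ← intervalIntegral.integral_of_le hεX]
  exact (log_sub_le_integral_squareInnerBound hε hεX).trans <|
    intervalIntegral.integral_mono_on hεX (intervalIntegrable_squareInnerBound hε hεX) hinner
      fun x hx => squareInnerBound_le_integral hε hεX hg hf1 hg1 hx.1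

end Square

section DifferenceQuotient

variable {f : ℝ → ℝ} {K : NNReal}

theorem sq_sub_div_sq_le_of_lipschitzWith (hf : LipschitzWith K f) (x y : ℝ) :
    (f x - f y) ^ 2 / (x - y) ^ 2 ≤ K ^ 2 := by
  have h := hf.dist_le_mul x y
  rw [Real.dist_eq, Real.dist_eq] at h
  refine div_le_of_le_mul₀ (sq_nonneg _) (sq_nonneg _) ?_
  calc (f x - f y) ^ 2 = |f x - f y| ^ 2 := (sq_abs _).symm
    _ ≤ (K * |x - y|) ^ 2 := by gcongr
    _ = K ^ 2 * (x - y) ^ 2 := by rw [mul_pow, sq_abs]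

theorem integrableOn_sq_sub_div_sq_of_lipschitzWith (hf : LipschitzWith K f)
    {s : Set (ℝ × ℝ)} (hs : volume.prod volume s ≠ ∞) :
    IntegrableOn (fun p : ℝ × ℝ => (f p.1 - f p.2) ^ 2 / (p.1 - p.2) ^ 2) s
      (volume.prod volume) := by
  have hc := hf.continuous
  refine Measure.integrableOn_of_bounded hs (Measurable.aestronglyMeasurable (by fun_prop))
    (M := K ^ 2) (ae_of_all _ fun p => ?_)
  rw [Real.norm_of_nonneg (by positivity)]
  exact sq_sub_div_sq_le_of_lipschitzWith hf p.1 p.2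

theorem two_mul_integral_le_of_disjoint (hf : LipschitzWith K f) {s t u : Set ℝ}
    (hs : MeasurableSet s) (ht : MeasurableSet t) (hu : volume u ≠ ∞) (hsu : s ⊆ u)
    (htu : t ⊆ u) (hst : Disjoint s t) :
    2 * ∫ x in s, ∫ y in t, (f x - f y) ^ 2 / (x - y) ^ 2
      ≤ ∫ x in u, ∫ y in u, (f x - f y) ^ 2 / (x - y) ^ 2 := by
  set H := fun p : ℝ × ℝ => (f p.1 - f p.2) ^ 2 / (p.1 - p.2) ^ 2
  have hint {a b : Set ℝ} (ha : a ⊆ u) (hb : b ⊆ u) :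
      IntegrableOn H (a ×ˢ b) (volume.prod volume) :=
    integrableOn_sq_sub_div_sq_of_lipschitzWith hf <| ne_top_of_le_ne_top
      (by rw [Measure.prod_prod]; exact ENNReal.mul_ne_top hu hu) (measure_mono (prod_mono ha hb))
  have hswap : ∫ z in t ×ˢ s, H z ∂(volume.prod volume)
      = ∫ z in s ×ˢ t, H z ∂(volume.prod volume) := by
    rw [← setIntegral_prod_swap]
    congr 1 with z
    simp only [H, Prod.fst_swap, Prod.snd_swap]
    rw [← neg_sub (f z.1), ← neg_sub z.1, neg_sq, neg_sq]
  calc 2 * ∫ x in s, ∫ y in t, H (x, y)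
      = ∫ z in s ×ˢ t, H z ∂(volume.prod volume)
          + ∫ z in t ×ˢ s, H z ∂(volume.prod volume) := by
        rw [hswap, setIntegral_prod _ (hint hsu htu)]; ring
    _ = ∫ z in s ×ˢ t ∪ t ×ˢ s, H z ∂(volume.prod volume) :=
        (setIntegral_union (disjoint_prod.2 (Or.inl hst)) (ht.prod hs) (hint hsu htu)
          (hint htu hsu)).symm
    _ ≤ ∫ z in u ×ˢ u, H z ∂(volume.prod volume) :=
        setIntegral_mono_set (hint subset_rfl subset_rfl) (ae_of_all _ fun _ => by positivity)
          (union_subset (prod_mono hsu htu) (prod_mono htu hsu)).eventuallyLE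
    _ = ∫ x in u, ∫ y in u, H (x, y) := setIntegral_prod _ (hint subset_rfl subset_rfl)

end DifferenceQuotient

theorem setIntegral_Ioo_neg (g : ℝ → ℝ) {a b : ℝ} (hab : a ≤ b) :
    ∫ y in Ioo (-b) (-a), g y = ∫ y in Ioo a b, g (-y) := by
  rw [← integral_Ioc_eq_integral_Ioo, ← integral_Ioc_eq_integral_Ioo,
    ← intervalIntegral.integral_of_le (neg_le_neg hab), ← intervalIntegral.integral_of_le hab,
    intervalIntegral.integral_comp_neg]

/-- Lemma `le:opt`, nonlocal lower bound: the optimal profile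
`ξ_{ε,R}` satisfies a logarithmic lower bound for the nonlocal double integral. -/
theorem stmt_8 :
    ∃ c : ℝ, 0 < c ∧
      ∀ (R : ℝ≥0∞), 0 < R → ∀ ε : ℝ, 0 < ε →
        ∀ ξ : ℝ → ℝ, (∀ x, ξ x ∈ Set.Icc (-1 : ℝ) 1) → ξ 0 = 0 →
          (∀ x, HasDerivAt ξ
            (ε⁻¹ * Real.sqrt (1 - ξ x ^ 2) *
              Real.sqrt (1 - ξ x ^ 2 + odeCoeff ε R ^ 2)) x) →
          ∀ X : ℝ, 2 * ε ≤ X →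
            8 * Real.log (c * X / ε) ≤
              ∫ x in Set.Ioo (-X) X, ∫ y in Set.Ioo (-X) X,
                (ξ x - ξ y) ^ 2 / (x - y) ^ 2 := by
  -- the `4` comes from `log (X / 4ε)`, the factor `e⁻¹` absorbs the error `8 e^{-2} ≤ 8`
  refine ⟨exp (-1) / 4, by positivity, fun R _ ε hε ξ hξ h0 hderiv X hX => ?_⟩
  have hlip : LipschitzWith ⟨ε⁻¹ * √(1 + odeCoeff ε R ^ 2), by positivity⟩ ξ :=
    lipschitzWith_of_abs_hasDerivAt_le hderiv fun x =>
      abs_inv_mul_sqrt_mul_sqrt_le _ hε.le (by nlinarith)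
  have hcomp := tanh_comparison hderiv
    (fun x => div_le_inv_mul_sqrt_mul_sqrt _ hε.le (by nlinarith [(hξ x).1, (hξ x).2])) h0
  have htail {x : ℝ} (hx : ε ≤ x) : 1 - tanh (x / ε) ≤ 2 * exp (-2 / ε * x) := by
    rw [div_mul_eq_mul_div, mul_div_assoc]; exact one_sub_tanh_le _
  have hsquare := log_sub_le_integral_square hε (by linarith) hlip.continuous
    (g := fun y => -ξ (-y)) (hlip.continuous.comp continuous_neg).neg
    (fun x hx => by linarith [(hcomp x).1 (by linarith), htail hx])
    (fun y hy => by
      have h := (hcomp (-y)).2 (by linarith)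
      rw [neg_div, tanh_neg] at h
      linarith [htail hy])
  have hquadrant : ∫ x in Ioo ε X, ∫ y in Ioo (-X) (-ε), (ξ x - ξ y) ^ 2 / (x - y) ^ 2
      = ∫ x in Ioo ε X, ∫ y in Ioo ε X, (ξ x + -ξ (-y)) ^ 2 / (x + y) ^ 2 := by
    congr 1 with x
    rw [setIntegral_Ioo_neg _ (by linarith)]
    simp only [sub_neg_eq_add, ← sub_eq_add_neg]
  have hdouble := two_mul_integral_le_of_disjoint hlip measurableSet_Ioo measurableSet_Ioo
    measure_Ioo_lt_top.ne (Ioo_subset_Ioo_left (by linarith : -X ≤ ε))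
    (Ioo_subset_Ioo_right (by linarith : -ε ≤ X))
    (disjoint_left.2 fun z hz₁ hz₂ => by linarith [hz₁.1, hz₂.2])
  have hc : exp (-1) / 4 * X / ε = exp (-1) * (X / (4 * ε)) := by ring
  rw [hc, Real.log_mul (exp_pos _).ne' (div_pos (by linarith) (by positivity)).ne', log_exp]
  linarith [exp_le_one_iff.2 (by norm_num : (-2 : ℝ) ≤ 0)]
end
end
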